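/- Let m > 0 and let A, B be Hermitian d×d complex matrices with A ≥ m·1 and B ≥ m·1 (all eigenvalues at least m). Then ‖log A − log B‖ ≤ m^{−1} ‖A − B‖, where log denotes the matrix logarithm of a positive definite matrix (via the functional calculus) and ‖·‖ is the operator norm. -/

import Mathlib

open scoped Matrix.Norms.L2Operator ComplexOrder

/-- The logarithm of a positive definite Hermitian matrix, defined via the spectral
decomposition by applying the real logarithm to the eigenvalues (junk value `0` on
non-Hermitian input). -/
noncomputable def matLog {d : ℕ} (A : Matrix (Fin d) (Fin d) ℂ) : Matrix (Fin d) (Fin d) ℂ :=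
  if hA : A.IsHermitian then
    (hA.eigenvectorUnitary : Matrix (Fin d) (Fin d) ℂ) *
      Matrix.diagonal (fun i => (Real.log (hA.eigenvalues i) : ℂ)) *
      star (hA.eigenvectorUnitary : Matrix (Fin d) (Fin d) ℂ)
  else 0

/-!
Both matrices dominate `m`, so `A ≤ B + ‖A - B‖ ≤ (1 + ‖A - B‖ / m) B`. The logarithm is operator
monotone and turns the scalar factor into an additive constant, whence
`log A ≤ log B + log (1 + ‖A - B‖ / m) ≤ log B + ‖A - B‖ / m`; by symmetry the self-adjoint
operator `log A - log B` lies between `∓ ‖A - B‖ / m`, which bounds its norm. The argument works in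
any unital C⋆-algebra.
-/

section CStarAlgebra

variable {A : Type*} [CStarAlgebra A] [PartialOrder A] [StarOrderedRing A]

lemma IsSelfAdjoint.norm_le_of_neg_algebraMap_le_of_le_algebraMap {x : A} (hx : IsSelfAdjoint x)
    {r : ℝ} (hr : 0 ≤ r) (hlo : -algebraMap ℝ A r ≤ x) (hhi : x ≤ algebraMap ℝ A r) :
    ‖x‖ ≤ r := by
  obtain h | h := subsingleton_or_nontrivial A
  · simpa [Subsingleton.elim x 0] using hr
  have hspec_le := (le_algebraMap_iff_spectrum_le hx).mp hhi
  have hle_spec := (algebraMap_le_iff_le_spectrum (r := -r) hx).mp (by rwa [map_neg])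
  rcases CStarAlgebra.norm_or_neg_norm_mem_spectrum hx with hmem | hmem
  · exact hspec_le _ hmem
  · linarith [hle_spec _ hmem]

lemma CFC.log_le_algebraMap_add_log {a b : A} {m : ℝ} (hm : 0 < m)
    (ha : IsStrictlyPositive a) (hb : algebraMap ℝ A m ≤ b) :
    CFC.log a ≤ algebraMap ℝ A (m⁻¹ * ‖a - b‖) + CFC.log b := by
  set s := m⁻¹ * ‖a - b‖ with hs
  have hs0 : 0 ≤ s := by positivity
  have hb_pos : IsStrictlyPositive b := (isStrictlyPositive_algebraMap hm).of_le hb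
  have hab : IsSelfAdjoint (a - b) := ha.isSelfAdjoint.sub hb_pos.isSelfAdjoint
  have h_shift : algebraMap ℝ A ‖a - b‖ ≤ s • b := by
    calc algebraMap ℝ A ‖a - b‖ = s • algebraMap ℝ A m := by
          rw [Algebra.smul_def, ← map_mul, hs, mul_right_comm, inv_mul_cancel₀ hm.ne', one_mul]
      _ ≤ s • b := smul_le_smul_of_nonneg_left hb hs0
  have h_le : a ≤ (1 + s) • b := by
    calc a ≤ algebraMap ℝ A ‖a - b‖ + b := sub_le_iff_le_add.mp hab.le_algebraMap_norm_self
      _ ≤ s • b + b := add_le_add_left h_shift b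
      _ = (1 + s) • b := by rw [add_smul, one_smul, add_comm]
  calc CFC.log a ≤ CFC.log ((1 + s) • b) := CFC.log_le_log h_le ha
    _ = algebraMap ℝ A (Real.log (1 + s)) + CFC.log b := CFC.log_smul' _ (by positivity)
    _ ≤ algebraMap ℝ A s + CFC.log b := by
        gcongr
        exact (Real.log_le_sub_one_of_pos (by positivity)).trans_eq (by ring)

lemma CFC.norm_log_sub_log_le {a b : A} {m : ℝ} (hm : 0 < m)
    (ha : algebraMap ℝ A m ≤ a) (hb : algebraMap ℝ A m ≤ b) :
    ‖CFC.log a - CFC.log b‖ ≤ m⁻¹ * ‖a - b‖ := by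
  have hm_pos : IsStrictlyPositive (algebraMap ℝ A m) := isStrictlyPositive_algebraMap hm
  have hab := CFC.log_le_algebraMap_add_log hm (hm_pos.of_le ha) hb
  have hba := CFC.log_le_algebraMap_add_log hm (hm_pos.of_le hb) ha
  rw [norm_sub_rev b] at hba
  refine IsSelfAdjoint.norm_le_of_neg_algebraMap_le_of_le_algebraMap
    (IsSelfAdjoint.log.sub IsSelfAdjoint.log) (by positivity) ?_ ?_
  · exact neg_le_sub_iff_le_add'.mpr hba
  · exact sub_le_iff_le_add.mpr hab

end CStarAlgebra

open scoped MatrixOrder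

lemma Matrix.IsHermitian.matLog_eq_log {d : ℕ} {M : Matrix (Fin d) (Fin d) ℂ}
    (hM : M.IsHermitian) : matLog M = CFC.log M := by
  rw [matLog, dif_pos hM, CFC.log, hM.cfc_eq, Matrix.IsHermitian.cfc,
    Unitary.conjStarAlgAut_apply]
  rfl

lemma Matrix.algebraMap_le_iff_posSemidef_sub {𝕜 n : Type*} [RCLike 𝕜] [Fintype n]
    [DecidableEq n] (M : Matrix n n 𝕜) (m : ℝ) :
    algebraMap ℝ (Matrix n n 𝕜) m ≤ M ↔ (M - m • 1).PosSemidef := by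
  rw [Matrix.le_iff, Algebra.algebraMap_eq_smul_one]

/-- Lipschitz estimate for the matrix logarithm: if `A, B ≥ m·1 > 0` are Hermitian, then
`‖log A - log B‖ ≤ m⁻¹ ‖A - B‖` in operator norm. -/
theorem matLog_lipschitz (d : ℕ) (m : ℝ) (hm : 0 < m)
    (A B : Matrix (Fin d) (Fin d) ℂ) (hA : A.IsHermitian) (hB : B.IsHermitian)
    (hAm : (A - m • (1 : Matrix (Fin d) (Fin d) ℂ)).PosSemidef)
    (hBm : (B - m • (1 : Matrix (Fin d) (Fin d) ℂ)).PosSemidef) :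
    ‖matLog A - matLog B‖ ≤ m⁻¹ * ‖A - B‖ := by
  rw [hA.matLog_eq_log, hB.matLog_eq_log]
  exact CFC.norm_log_sub_log_le hm ((Matrix.algebraMap_le_iff_posSemidef_sub A m).mpr hAm)
    ((Matrix.algebraMap_le_iff_posSemidef_sub B m).mpr hBm)
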